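/- arXiv:1503.00306 — 3 statements merged into one kernel-verified Lean document; each statement's English description precedes it below -/
import Mathlib

section
/- Let S be a finite index set of methods partitioned into disjoint sets In and Out, and let α ∈ (0,1). For each i ∈ S let p_i ∈ (0,1] and r_i ∈ [0,1] satisfy r_i > 0 for i ∈ In and r_i < 1 for i ∈ Out, and define q_i := α·r_i·(1−p_i)/(p_i·(1−α)). Define R := (∏_{i∈In} r_i)·(∏_{i∈Out} (1−r_i)), Q := (∏_{i∈In} q_i)·(∏_{i∈Out} (1−q_i)), and the Bayesian posterior P := R·α/(R·α + Q·(1−α)). Then P = 1/(1+K), where K = ((1−α)/α)·(∏_{i∈In} α·(1−p_i)/(p_i·(1−α)))·(∏_{i∈Out} (p_i·(1−α) − α·r_i·(1−p_i))/(p_i·(1−α)·(1−r_i))). -/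
/-! Writing `λᵢ = α (1 - pᵢ) / (pᵢ (1 - α))`, each false-output rate is `qᵢ = rᵢ λᵢ`, so every
factor of `Q` is the matching factor of `R` times a ratio independent of the prior: `Q = R · L`
with `L` the product of the ratios appearing in `K`. Hence `R` cancels from the posterior and
`P = α / (α + L (1 - α)) = 1 / (1 + (1 - α) / α · L)`. -/

open Finset

section Field

variable {F : Type*} [Field F]

lemma one_sub_mul_div_eq_mul {a p r : F} (hp : p * (1 - a) ≠ 0) (hr : 1 - r ≠ 0) :
    1 - a * r * (1 - p) / (p * (1 - a)) =
      (1 - r) * ((p * (1 - a) - a * r * (1 - p)) / (p * (1 - a) * (1 - r))) := by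
  field_simp
  rw [sub_div, div_self hp]

lemma mul_div_add_mul_eq_one_div_one_add {R a : F} (L : F) (hR : R ≠ 0) (ha : a ≠ 0) :
    R * a / (R * a + R * L * (1 - a)) = 1 / (1 + (1 - a) / a * L) := by
  have hsum : R * a + R * L * (1 - a) = R * (a + L * (1 - a)) := by ring
  have hodds : 1 + (1 - a) / a * L = (a + L * (1 - a)) / a := by field_simp
  rw [hsum, mul_div_mul_left _ _ hR, hodds, one_div_div]

end Field

theorem stmt0_general {ι : Type*} [DecidableEq ι] (In Out : Finset ι)
    (α : ℝ) (hα : α ∈ Set.Ioo (0:ℝ) 1)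
    (p r : ι → ℝ)
    (hp : ∀ i ∈ In ∪ Out, p i ∈ Set.Ioc (0:ℝ) 1)
    (hrIn : ∀ i ∈ In, 0 < r i)
    (hrOut : ∀ i ∈ Out, r i < 1)
    (q : ι → ℝ)
    (hq : ∀ i ∈ In ∪ Out, q i = α * r i * (1 - p i) / (p i * (1 - α)))
    (R Q P K : ℝ)
    (hR : R = (∏ i ∈ In, r i) * ∏ i ∈ Out, (1 - r i))
    (hQ : Q = (∏ i ∈ In, q i) * ∏ i ∈ Out, (1 - q i))
    (hP : P = R * α / (R * α + Q * (1 - α)))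
    (hK : K = ((1 - α) / α) * (∏ i ∈ In, α * (1 - p i) / (p i * (1 - α))) *
      ∏ i ∈ Out, (p i * (1 - α) - α * r i * (1 - p i)) / (p i * (1 - α) * (1 - r i))) :
    P = 1 / (1 + K) := by
  obtain ⟨hα0, hα1⟩ := hα
  have hqIn : ∏ i ∈ In, q i = (∏ i ∈ In, r i) * ∏ i ∈ In, α * (1 - p i) / (p i * (1 - α)) := by
    rw [← prod_mul_distrib]
    refine prod_congr rfl fun i hi => ?_
    rw [hq i (mem_union_left _ hi)]
    ring
  have hqOut : ∏ i ∈ Out, (1 - q i) = (∏ i ∈ Out, (1 - r i)) *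
      ∏ i ∈ Out, (p i * (1 - α) - α * r i * (1 - p i)) / (p i * (1 - α) * (1 - r i)) := by
    rw [← prod_mul_distrib]
    refine prod_congr rfl fun i hi => ?_
    have hpi := (hp i (mem_union_right _ hi)).1
    rw [hq i (mem_union_right _ hi)]
    exact one_sub_mul_div_eq_mul (mul_ne_zero hpi.ne' (by linarith)) (by linarith [hrOut i hi])
  have hR0 : R ≠ 0 := by
    rw [hR]
    exact mul_ne_zero (prod_ne_zero_iff.2 fun i hi => (hrIn i hi).ne')
      (prod_ne_zero_iff.2 fun i hi => by linarith [hrOut i hi])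
  rw [hP, hK, hQ, hqIn, hqOut, mul_mul_mul_comm, ← hR, mul_assoc _ (∏ i ∈ In, _)]
  exact mul_div_add_mul_eq_one_div_one_add _ hR0 hα0.ne'

theorem stmt0 {ι : Type*} [DecidableEq ι] (In Out : Finset ι) (hdisj : Disjoint In Out)
    (α : ℝ) (hα : α ∈ Set.Ioo (0:ℝ) 1)
    (p r : ι → ℝ)
    (hp : ∀ i ∈ In ∪ Out, p i ∈ Set.Ioc (0:ℝ) 1)
    (hr : ∀ i ∈ In ∪ Out, r i ∈ Set.Icc (0:ℝ) 1)
    (hrIn : ∀ i ∈ In, 0 < r i)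
    (hrOut : ∀ i ∈ Out, r i < 1)
    (q : ι → ℝ)
    (hq : ∀ i ∈ In ∪ Out, q i = α * r i * (1 - p i) / (p i * (1 - α)))
    (R Q P K : ℝ)
    (hR : R = (∏ i ∈ In, r i) * ∏ i ∈ Out, (1 - r i))
    (hQ : Q = (∏ i ∈ In, q i) * ∏ i ∈ Out, (1 - q i))
    (hP : P = R * α / (R * α + Q * (1 - α)))
    (hK : K = ((1 - α) / α) * (∏ i ∈ In, α * (1 - p i) / (p i * (1 - α))) *
      ∏ i ∈ Out, (p i * (1 - α) - α * r i * (1 - p i)) / (p i * (1 - α) * (1 - r i))) :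
    P = 1 / (1 + K) :=
  stmt0_general In Out α hα p r hp hrIn hrOut q hq R Q P K hR hQ hP hK
end

section
/- Let S be a finite set of N methods. For each i ∈ S let q_i, r_i ∈ (0,1) and let c_i ∈ [0,1] be the method's confidence for a tuple t. Let γ := max over i ∈ S of { q_i/r_i, (1−q_i)/(1−r_i), r_i/q_i, (1−r_i)/(1−q_i) } (so γ ≥ 1). For each subset T ⊆ S define the weight w(T) := (∏_{i∈T} c_i)·(∏_{i∈S∖T} (1−c_i)) and the deterministic probability P(T) := 1/(1 + (∏_{i∈T} q_i/r_i)·(∏_{i∈S∖T} (1−q_i)/(1−r_i))). Define the exact probability Ex := Σ_{T⊆S} w(T)·P(T) and the approximate probability Ap := 1/(1 + ∏_{i∈S} (q_i/r_i)^{c_i}·((1−q_i)/(1−r_i))^{1−c_i}). Then both Ex and Ap lie in the interval [1/(1+γ^N), 1/(1+γ^{−N})]; consequently Ratio := max{Ex/Ap, Ap/Ex} ≤ γ^N and Abs := |Ex − Ap| ≤ (γ^N − 1)/(γ^N + 1). -/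
/-!
Every per-method factor `q/r` or `(1-q)/(1-r)` lies in `[γ⁻¹, γ]`, and so does any weighted
geometric mean `x^c y^(1-c)` of two of them. A product of `N` such factors therefore lies in
`[γ^(-N), γ^N]`, so `1/(1+x)` places every `P(T)` and `Ap` in `[1/(1+γ^N), 1/(1+γ^(-N))]`.
`Ex` is a convex combination of the `P(T)` (the weights `w(T)` expand `∏ (c i + (1 - c i)) = 1`),
so it lies there too. Since the upper end is `γ^N` times the lower end, two points of this
interval have ratio at most `γ^N` and distance at most `(γ^N - 1)/(γ^N + 1)`.
-/

open Finset Set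

lemma div_mem_Icc_inv_of_div_le {a b γ : ℝ} (ha : 0 < a) (hb : 0 < b)
    (hab : a / b ≤ γ) (hba : b / a ≤ γ) : a / b ∈ Icc γ⁻¹ γ := by
  refine ⟨?_, hab⟩
  simpa only [inv_div] using inv_anti₀ (div_pos hb ha) hba

lemma div_mem_Icc_inv_of_max_le {q r γ : ℝ} (hq : q ∈ Ioo (0:ℝ) 1) (hr : r ∈ Ioo (0:ℝ) 1)
    (h : max (max (q / r) ((1 - q) / (1 - r))) (max (r / q) ((1 - r) / (1 - q))) ≤ γ) :
    q / r ∈ Icc γ⁻¹ γ ∧ (1 - q) / (1 - r) ∈ Icc γ⁻¹ γ := by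
  simp only [max_le_iff] at h
  obtain ⟨⟨hqr, hqr'⟩, hrq, hrq'⟩ := h
  exact ⟨div_mem_Icc_inv_of_div_le hq.1 hr.1 hqr hrq,
    div_mem_Icc_inv_of_div_le (sub_pos.2 hq.2) (sub_pos.2 hr.2) hqr' hrq'⟩

lemma rpow_mul_rpow_one_sub_mem_Icc {a b x y c : ℝ} (ha : 0 ≤ a) (hx : x ∈ Icc a b)
    (hy : y ∈ Icc a b) (hc : c ∈ Icc (0:ℝ) 1) : x ^ c * y ^ (1 - c) ∈ Icc a b := by
  have hc' : 0 ≤ 1 - c := sub_nonneg.2 hc.2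
  have hsplit : ∀ z : ℝ, 0 ≤ z → z = z ^ c * z ^ (1 - c) := fun z hz => by
    rw [← Real.rpow_add' hz (by norm_num), add_sub_cancel, Real.rpow_one]
  have hx0 : 0 ≤ x := ha.trans hx.1
  have hy0 : 0 ≤ y := ha.trans hy.1
  constructor
  · rw [hsplit a ha]
    exact mul_le_mul (Real.rpow_le_rpow ha hx.1 hc.1) (Real.rpow_le_rpow ha hy.1 hc')
      (Real.rpow_nonneg ha _) (Real.rpow_nonneg hx0 _)
  · rw [hsplit b (ha.trans (hx.1.trans hx.2))]
    exact mul_le_mul (Real.rpow_le_rpow hx0 hx.2 hc.1) (Real.rpow_le_rpow hy0 hy.2 hc')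
      (Real.rpow_nonneg hy0 _) (Real.rpow_nonneg (hx0.trans hx.2) _)

lemma prod_mem_Icc_inv_pow {ι : Type*} {S : Finset ι} {f : ι → ℝ} {γ : ℝ} (hγ : 0 ≤ γ)
    (hf : ∀ i ∈ S, f i ∈ Icc γ⁻¹ γ) : ∏ i ∈ S, f i ∈ Icc (γ ^ #S)⁻¹ (γ ^ #S) := by
  rw [← inv_pow, ← prod_const, ← prod_const]
  exact ⟨prod_le_prod (fun _ _ => inv_nonneg.2 hγ) fun i hi => (hf i hi).1,
    prod_le_prod (fun i hi => (inv_nonneg.2 hγ).trans (hf i hi).1) fun i hi => (hf i hi).2⟩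

lemma one_div_one_add_mem_Icc {G x : ℝ} (hG : 0 < G) (hx : x ∈ Icc G⁻¹ G) :
    1 / (1 + x) ∈ Icc (1 / (1 + G)) (1 / (1 + G⁻¹)) := by
  have hx0 : 0 < x := (inv_pos.2 hG).trans_le hx.1
  exact ⟨one_div_le_one_div_of_le (by linarith) (by linarith [hx.2]),
    one_div_le_one_div_of_le (by positivity) (by linarith [hx.1])⟩

section TwoPoints

variable {G x y : ℝ}

lemma one_div_one_add_inv (hG : 0 < G) : 1 / (1 + G⁻¹) = G * (1 / (1 + G)) := by
  field_simp
  ring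

lemma div_le_of_mem_Icc_one_div_one_add (hG : 0 < G)
    (hx : x ∈ Icc (1 / (1 + G)) (1 / (1 + G⁻¹))) (hy : y ∈ Icc (1 / (1 + G)) (1 / (1 + G⁻¹))) :
    x / y ≤ G := by
  have hy0 : 0 < y := lt_of_lt_of_le (by positivity) hy.1
  rw [div_le_iff₀ hy0]
  calc x ≤ G * (1 / (1 + G)) := one_div_one_add_inv hG ▸ hx.2
    _ ≤ G * y := mul_le_mul_of_nonneg_left hy.1 hG.le

lemma abs_sub_le_of_mem_Icc_one_div_one_add (hG : 0 < G)
    (hx : x ∈ Icc (1 / (1 + G)) (1 / (1 + G⁻¹))) (hy : y ∈ Icc (1 / (1 + G)) (1 / (1 + G⁻¹))) :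
    |x - y| ≤ (G - 1) / (G + 1) := by
  have hwidth : 1 / (1 + G⁻¹) - 1 / (1 + G) = (G - 1) / (G + 1) := by
    rw [one_div_one_add_inv hG]
    field_simp
    ring
  rw [abs_sub_le_iff]
  constructor <;> linarith [hx.1, hx.2, hy.1, hy.2]

end TwoPoints

lemma sum_powerset_prod_mul_prod_sdiff_one_sub {ι : Type*} [DecidableEq ι] (S : Finset ι)
    (c : ι → ℝ) : ∑ T ∈ S.powerset, (∏ i ∈ T, c i) * ∏ i ∈ S \ T, (1 - c i) = 1 := by
  simp [← prod_add]

lemma prod_mul_prod_sdiff_eq_prod_piecewise {ι : Type*} [DecidableEq ι] {S T : Finset ι}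
    (hT : T ⊆ S) (f g : ι → ℝ) :
    (∏ i ∈ T, f i) * ∏ i ∈ S \ T, g i = ∏ i ∈ S, T.piecewise f g i := by
  rw [prod_piecewise, Finset.inter_eq_right.2 hT]

theorem stmt7 {ι : Type*} [DecidableEq ι] (S : Finset ι) (hS : S.Nonempty)
    (q r c : ι → ℝ)
    (hq : ∀ i ∈ S, q i ∈ Set.Ioo (0:ℝ) 1)
    (hr : ∀ i ∈ S, r i ∈ Set.Ioo (0:ℝ) 1)
    (hc : ∀ i ∈ S, c i ∈ Set.Icc (0:ℝ) 1)
    (γ : ℝ)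
    (hγ : γ = S.sup' hS (fun i =>
      max (max (q i / r i) ((1 - q i) / (1 - r i)))
          (max (r i / q i) ((1 - r i) / (1 - q i)))))
    (w P : Finset ι → ℝ)
    (hw : ∀ T ∈ S.powerset, w T = (∏ i ∈ T, c i) * ∏ i ∈ S \ T, (1 - c i))
    (hP : ∀ T ∈ S.powerset, P T =
      1 / (1 + (∏ i ∈ T, q i / r i) * ∏ i ∈ S \ T, (1 - q i) / (1 - r i)))
    (Ex Ap : ℝ)
    (hEx : Ex = ∑ T ∈ S.powerset, w T * P T)
    (hAp : Ap = 1 / (1 + ∏ i ∈ S, (q i / r i) ^ (c i) * ((1 - q i) / (1 - r i)) ^ (1 - c i))) :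
    Ex ∈ Set.Icc (1 / (1 + γ ^ S.card)) (1 / (1 + (γ ^ S.card)⁻¹)) ∧
    Ap ∈ Set.Icc (1 / (1 + γ ^ S.card)) (1 / (1 + (γ ^ S.card)⁻¹)) ∧
    max (Ex / Ap) (Ap / Ex) ≤ γ ^ S.card ∧
    |Ex - Ap| ≤ (γ ^ S.card - 1) / (γ ^ S.card + 1) := by
  have hfac : ∀ i ∈ S, q i / r i ∈ Icc γ⁻¹ γ ∧ (1 - q i) / (1 - r i) ∈ Icc γ⁻¹ γ :=
    fun i hi => div_mem_Icc_inv_of_max_le (hq i hi) (hr i hi) ((sup'_le_iff hS _).1 hγ.ge i hi)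
  have hγ0 : 0 < γ := by
    obtain ⟨i, hi⟩ := hS
    exact (div_pos (hq i hi).1 (hr i hi).1).trans_le (hfac i hi).1.2
  have hG : 0 < γ ^ #S := pow_pos hγ0 _
  have hPmem : ∀ T ∈ S.powerset, P T ∈ Icc (1 / (1 + γ ^ #S)) (1 / (1 + (γ ^ #S)⁻¹)) := by
    intro T hT
    rw [hP T hT, prod_mul_prod_sdiff_eq_prod_piecewise (mem_powerset.1 hT)]
    refine one_div_one_add_mem_Icc hG (prod_mem_Icc_inv_pow hγ0.le fun i hi => ?_)
    by_cases hiT : i ∈ T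
    · simpa [hiT] using (hfac i hi).1
    · simpa [hiT] using (hfac i hi).2
  have hw0 : ∀ T ∈ S.powerset, 0 ≤ w T := fun T hT => by
    have hTS := mem_powerset.1 hT
    rw [hw T hT]
    exact mul_nonneg (prod_nonneg fun i hi => (hc i (hTS hi)).1)
      (prod_nonneg fun i hi => sub_nonneg.2 (hc i (mem_sdiff.1 hi).1).2)
  have hw1 : ∑ T ∈ S.powerset, w T = 1 := by
    rw [sum_congr rfl hw, sum_powerset_prod_mul_prod_sdiff_one_sub]
  have hExmem : Ex ∈ Icc (1 / (1 + γ ^ #S)) (1 / (1 + (γ ^ #S)⁻¹)) := by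
    simpa only [hEx, smul_eq_mul] using (convex_Icc _ _).sum_mem hw0 hw1 hPmem
  have hApmem : Ap ∈ Icc (1 / (1 + γ ^ #S)) (1 / (1 + (γ ^ #S)⁻¹)) := by
    rw [hAp]
    exact one_div_one_add_mem_Icc hG (prod_mem_Icc_inv_pow hγ0.le fun i hi =>
      rpow_mul_rpow_one_sub_mem_Icc (inv_nonneg.2 hγ0.le) (hfac i hi).1 (hfac i hi).2 (hc i hi))
  exact ⟨hExmem, hApmem,
    max_le (div_le_of_mem_Icc_one_div_one_add hG hExmem hApmem)
      (div_le_of_mem_Icc_one_div_one_add hG hApmem hExmem),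
    abs_sub_le_of_mem_Icc_one_div_one_add hG hExmem hApmem⟩
end

section
/- Let S be a finite set, let c : S → ℝ with 0 ≤ c_i ≤ 1 for all i, and let X, Y : S → ℝ with X_i > 0 and Y_i > 0 for all i. For each subset T ⊆ S define c(T) := (∏_{i∈T} c_i)·(∏_{i∈S∖T} (1−c_i)). Then ∏ over all subsets T ⊆ S of ( (∏_{i∈T} X_i)·(∏_{i∈S∖T} Y_i) )^{c(T)} = ∏_{i∈S} X_i^{c_i} · Y_i^{1−c_i}. -/
/-!
Since all bases are positive, taking logarithms turns the claim into a linear identity in the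
exponents. The weights `c(T)` are the law of a random subset of `S` containing each `i`
independently with probability `c i`: they sum to `1`, and the subsets containing `i` carry total
weight `c i`. Hence the `c`-average of `∑ i ∈ T, log X i + ∑ i ∈ S \ T, log Y i` is
`∑ i ∈ S, (c i * log X i + (1 - c i) * log Y i)`. Both facts are instances of the expansion
`∏ i ∈ S, (f i + g i) = ∑ T ⊆ S, (∏ i ∈ T, f i) * ∏ i ∈ S \ T, g i`, valid for any `c` in any
commutative ring.
-/

open Finset

section ConfigWeight

variable {ι R : Type*} [DecidableEq ι] [CommRing R]

def configWeight (S : Finset ι) (c : ι → R) (T : Finset ι) : R :=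
  (∏ i ∈ T, c i) * ∏ i ∈ S \ T, (1 - c i)

theorem sum_configWeight (S : Finset ι) (c : ι → R) :
    ∑ T ∈ S.powerset, configWeight S c T = 1 := by
  simp only [configWeight, ← prod_add, add_sub_cancel, prod_const_one]

theorem sum_configWeight_of_mem {S : Finset ι} (c : ι → R) {i : ι} (hi : i ∈ S) :
    ∑ T ∈ S.powerset, (if i ∈ T then configWeight S c T else 0) = c i := by
  -- Expand `∏ j ∈ S, (c j + g j)` where `g` agrees with `1 - c` except that `g i = 0`.
  set g : ι → R := fun j => if j = i then 0 else 1 - c j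
  have hterm : ∀ T ∈ S.powerset,
      (∏ j ∈ T, c j) * ∏ j ∈ S \ T, g j = if i ∈ T then configWeight S c T else 0 := by
    intro T _
    split_ifs with hiT
    · refine congrArg _ (prod_congr rfl fun j hj => if_neg ?_)
      rintro rfl
      exact (mem_sdiff.mp hj).2 hiT
    · exact mul_eq_zero_of_right _ (prod_eq_zero (mem_sdiff.mpr ⟨hi, hiT⟩) (if_pos rfl))
  have hfactor : ∀ j ∈ S, c j + g j = if j = i then c i else 1 := by
    intro j _
    split_ifs with hji <;> simp [g, hji]
  rw [← sum_congr rfl hterm, ← prod_add, prod_congr rfl hfactor, prod_ite_eq' S i, if_pos hi]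

theorem sum_configWeight_mul_sum (S : Finset ι) (c a : ι → R) :
    ∑ T ∈ S.powerset, configWeight S c T * ∑ i ∈ T, a i = ∑ i ∈ S, c i * a i := by
  calc ∑ T ∈ S.powerset, configWeight S c T * ∑ i ∈ T, a i
      = ∑ T ∈ S.powerset, ∑ i ∈ S, (if i ∈ T then configWeight S c T else 0) * a i := by
        refine sum_congr rfl fun T hT => ?_
        rw [mul_sum, ← sum_subset (mem_powerset.mp hT) fun i _ hiT => by simp [hiT]]
        exact sum_congr rfl fun i hiT => by simp [hiT]
    _ = ∑ i ∈ S, c i * a i := by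
        rw [sum_comm]
        exact sum_congr rfl fun i hi => by rw [← sum_mul, sum_configWeight_of_mem c hi]

theorem sum_configWeight_mul_sum_add_sum_sdiff (S : Finset ι) (c a b : ι → R) :
    ∑ T ∈ S.powerset, configWeight S c T * (∑ i ∈ T, a i + ∑ i ∈ S \ T, b i) =
      ∑ i ∈ S, (c i * a i + (1 - c i) * b i) := by
  have hsdiff : ∀ T ∈ S.powerset, configWeight S c T * (∑ i ∈ T, a i + ∑ i ∈ S \ T, b i) =
      configWeight S c T * ∑ i ∈ T, (a i - b i) + configWeight S c T * ∑ i ∈ S, b i := by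
    intro T hT
    rw [sum_sdiff_eq_sub (mem_powerset.mp hT), sum_sub_distrib]
    ring
  rw [sum_congr rfl hsdiff, sum_add_distrib, sum_configWeight_mul_sum, ← sum_mul,
    sum_configWeight, one_mul, ← sum_add_distrib]
  exact sum_congr rfl fun i _ => by ring

end ConfigWeight

theorem stmt16_general {ι : Type*} [DecidableEq ι] (S : Finset ι)
    (c X Y : ι → ℝ)
    (hX : ∀ i ∈ S, 0 < X i)
    (hY : ∀ i ∈ S, 0 < Y i) :
    ∏ T ∈ S.powerset,
        ((∏ i ∈ T, X i) * ∏ i ∈ S \ T, Y i) ^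
          ((∏ i ∈ T, c i) * ∏ i ∈ S \ T, (1 - c i)) =
      ∏ i ∈ S, X i ^ (c i) * Y i ^ (1 - c i) := by
  have hXT : ∀ T ∈ S.powerset, 0 < ∏ i ∈ T, X i := fun T hT =>
    prod_pos fun i hi => hX i (mem_powerset.mp hT hi)
  have hYT : ∀ T : Finset ι, 0 < ∏ i ∈ S \ T, Y i := fun T =>
    prod_pos fun i hi => hY i (mem_sdiff.mp hi).1
  have hlog : ∀ T ∈ S.powerset, Real.log ((∏ i ∈ T, X i) * ∏ i ∈ S \ T, Y i) =
      ∑ i ∈ T, Real.log (X i) + ∑ i ∈ S \ T, Real.log (Y i) := by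
    intro T hT
    rw [Real.log_mul (hXT T hT).ne' (hYT T).ne',
      Real.log_prod fun i hi => (hX i (mem_powerset.mp hT hi)).ne',
      Real.log_prod fun i hi => (hY i (mem_sdiff.mp hi).1).ne']
  calc _ = Real.exp (∑ T ∈ S.powerset, configWeight S c T *
          (∑ i ∈ T, Real.log (X i) + ∑ i ∈ S \ T, Real.log (Y i))) := by
        rw [Real.exp_sum]
        refine prod_congr rfl fun T hT => ?_
        rw [Real.rpow_def_of_pos (mul_pos (hXT T hT) (hYT T)), hlog T hT, mul_comm, configWeight]
    _ = ∏ i ∈ S, X i ^ (c i) * Y i ^ (1 - c i) := by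
        rw [sum_configWeight_mul_sum_add_sum_sdiff, Real.exp_sum]
        refine prod_congr rfl fun i hi => ?_
        rw [Real.rpow_def_of_pos (hX i hi), Real.rpow_def_of_pos (hY i hi), Real.exp_add,
          mul_comm (c i), mul_comm (1 - c i)]

theorem stmt16 {ι : Type*} [DecidableEq ι] (S : Finset ι)
    (c X Y : ι → ℝ)
    (hc : ∀ i ∈ S, c i ∈ Set.Icc (0:ℝ) 1)
    (hX : ∀ i ∈ S, 0 < X i)
    (hY : ∀ i ∈ S, 0 < Y i) :
    ∏ T ∈ S.powerset,
        ((∏ i ∈ T, X i) * ∏ i ∈ S \ T, Y i) ^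
          ((∏ i ∈ T, c i) * ∏ i ∈ S \ T, (1 - c i)) =
      ∏ i ∈ S, X i ^ (c i) * Y i ^ (1 - c i) :=
  stmt16_general S c X Y hX hY
end
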